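/- Let t₀ > 0, α > −1, and β > 0 satisfy the Pohozaev relation 2α I = πβ(β−4) where I = ∫_{ℝ²} |x|² (t₀² + |x|²)^{α−1} e^{φ} and 0 < I < ∫_{ℝ²} (t₀² + |x|²)^{α} e^{φ} = 2πβ. If α > 0 then 4 < β < 4(1+α), equivalently 8π < ∫ (t₀²+|x|²)^α e^φ < 8π(1+α); if −1 < α < 0 then 4(1+α) < β < 4. -/

import Mathlib

/-!
Writing `s = I / (π β)`, the Pohozaev identity reads `β = 4 + 2 α s`, and the bounds
`0 < I < 2 π β` say `0 < s < 2`. Hence `β` lies strictly between `4` and `4 + 4 α`.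
-/

open Real MeasureTheory

namespace Pohozaev

variable {α β I : ℝ}

lemma beta_eq (hβ : 0 < β) (hPoh : 2 * α * I = π * β * (β - 4)) :
    β = 4 + 2 * α * (I / (π * β)) := by
  have : π * β ≠ 0 := by positivity
  field_simp
  linarith

lemma ratio_mem_Ioo (hβ : 0 < β) (hIpos : 0 < I) (hIlt : I < 2 * π * β) :
    I / (π * β) ∈ Set.Ioo 0 2 := by
  have : 0 < π * β := by positivity
  exact ⟨div_pos hIpos this, (div_lt_iff₀ this).2 (by linarith)⟩

lemma beta_mem_Ioo_of_pos (hα : 0 < α) (hβ : 0 < β) (hIpos : 0 < I)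
    (hIlt : I < 2 * π * β) (hPoh : 2 * α * I = π * β * (β - 4)) :
    β ∈ Set.Ioo 4 (4 * (1 + α)) := by
  obtain ⟨hs₀, hs₂⟩ := ratio_mem_Ioo hβ hIpos hIlt
  rw [beta_eq hβ hPoh]
  constructor <;> nlinarith

lemma beta_mem_Ioo_of_neg (hα : α < 0) (hβ : 0 < β) (hIpos : 0 < I)
    (hIlt : I < 2 * π * β) (hPoh : 2 * α * I = π * β * (β - 4)) :
    β ∈ Set.Ioo (4 * (1 + α)) 4 := by
  obtain ⟨hs₀, hs₂⟩ := ratio_mem_Ioo hβ hIpos hIlt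
  rw [beta_eq hβ hPoh]
  constructor <;> nlinarith

end Pohozaev

theorem pohozaev_mass_t0_positive_general
    (t₀ α β I : ℝ) (hβ : 0 < β)
    (φ : EuclideanSpace ℝ (Fin 2) → ℝ)
    (hmass : (∫ x, (t₀ ^ 2 + ‖x‖ ^ 2) ^ α * Real.exp (φ x)) = 2 * π * β)
    (hIpos : 0 < I) (hIlt : I < 2 * π * β)
    (hPoh : 2 * α * I = π * β * (β - 4)) :
    (0 < α → (4 < β ∧ β < 4 * (1 + α)) ∧
      8 * π < (∫ x, (t₀ ^ 2 + ‖x‖ ^ 2) ^ α * Real.exp (φ x)) ∧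
      (∫ x, (t₀ ^ 2 + ‖x‖ ^ 2) ^ α * Real.exp (φ x)) < 8 * π * (1 + α)) ∧
    (α < 0 → 4 * (1 + α) < β ∧ β < 4) := by
  refine ⟨fun hαpos => ?_, fun hαneg => Pohozaev.beta_mem_Ioo_of_neg hαneg hβ hIpos hIlt hPoh⟩
  obtain ⟨hβ₄, hβα⟩ := Pohozaev.beta_mem_Ioo_of_pos hαpos hβ hIpos hIlt hPoh
  have h2π : 0 < 2 * π := by positivity
  rw [hmass]
  exact ⟨⟨hβ₄, hβα⟩, by linarith [mul_lt_mul_of_pos_left hβ₄ h2π],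
    by linarith [mul_lt_mul_of_pos_left hβα h2π]⟩

theorem pohozaev_mass_t0_positive
    (t₀ α β I : ℝ) (ht₀ : 0 < t₀) (hα : -1 < α) (hβ : 0 < β)
    (φ : EuclideanSpace ℝ (Fin 2) → ℝ)
    (hmass : (∫ x, (t₀ ^ 2 + ‖x‖ ^ 2) ^ α * Real.exp (φ x)) = 2 * π * β)
    (hI : I = ∫ x, ‖x‖ ^ (2 : ℕ) * (t₀ ^ 2 + ‖x‖ ^ 2) ^ (α - 1) * Real.exp (φ x))
    (hIpos : 0 < I) (hIlt : I < 2 * π * β)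
    (hPoh : 2 * α * I = π * β * (β - 4)) :
    (0 < α → (4 < β ∧ β < 4 * (1 + α)) ∧
      8 * π < (∫ x, (t₀ ^ 2 + ‖x‖ ^ 2) ^ α * Real.exp (φ x)) ∧
      (∫ x, (t₀ ^ 2 + ‖x‖ ^ 2) ^ α * Real.exp (φ x)) < 8 * π * (1 + α)) ∧
    (α < 0 → 4 * (1 + α) < β ∧ β < 4) :=
  pohozaev_mass_t0_positive_general t₀ α β I hβ φ hmass hIpos hIlt hPoh
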